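/- For n ≥ 2 and even k ≥ 4, if x and y are vertices of the k-ary n-cube Q_n^k with different parities p(x) ≠ p(y), then there is a Hamiltonian path from x to y in Q_n^k. -/

import Mathlib

open SimpleGraph

/-- The `k`-ary `n`-cube: vertices are `n`-tuples over `ZMod k`; two vertices are
adjacent iff they differ in exactly one coordinate, and there by `±1` (mod `k`). -/
def karyCube (n k : ℕ) : SimpleGraph (Fin n → ZMod k) where
  Adj u v := u ≠ v ∧ ∃ j, (u j = v j + 1 ∨ v j = u j + 1) ∧ ∀ i, i ≠ j → u i = v i
  symm := by
    constructor
    rintro u v ⟨hne, j, hj, hrest⟩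
    exact ⟨hne.symm, j, hj.symm, fun i hi => (hrest i hi).symm⟩
  loopless := ⟨fun u h => h.1 rfl⟩

/-- Parity of a vertex: the mod 2 sum of its coordinates (via representatives in {0,…,k-1}). -/
def parity {n k : ℕ} (u : Fin n → ZMod k) : ZMod 2 :=
  ((∑ i, (u i).val : ℕ) : ZMod 2)

/-- `M` is a matching in `G`: a set of edges of `G` that are pairwise vertex-disjoint. -/
def IsMatchingIn {V : Type*} (G : SimpleGraph V) (M : Finset (Sym2 V)) : Prop :=
  (↑M : Set (Sym2 V)) ⊆ G.edgeSet ∧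
    ∀ e ∈ M, ∀ f ∈ M, e ≠ f → ∀ v : V, v ∈ e → v ∉ f

/-!
`Q_{n+1}^k` is the box product `C_k □ Q_n^k`, so we prove by induction on `n ≥ 2` the stronger
statement that `Q_n^k` is Hamiltonian laceable for the parity colouring. If `H` is laceable, of
even order and has vertices of both colours, then so is `C_k □ H`. Two vertices in the same layer
are joined by a boustrophedon that follows a Hamiltonian path of `H` through all `k` layers. For
vertices in layers `a` and `a + d`, a boustrophedon through the layers `a, …, a + (d - 1)` returns
to layer `a`, and the path then descends through the layers `a - 1, …, a + d`, crossing each one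
along a Hamiltonian path of `H` between vertices of alternating colours. The base case, the torus
`C_k □ C_k`, uses the same descent with the Hamiltonian paths of the cycle between neighbours in
place of laceability: their endpoints form a `±1` walk on the cycle, which reaches its target
after reflecting the layers or swapping the factors if necessary.
-/

namespace SimpleGraph

variable {V W : Type*} {G : SimpleGraph V} {G' : SimpleGraph W}

@[simps!]
def Iso.boxProd {V₁ V₂ W₁ W₂ : Type*} {G₁ : SimpleGraph V₁} {G₂ : SimpleGraph V₂}
    {H₁ : SimpleGraph W₁} {H₂ : SimpleGraph W₂} (e : G₁ ≃g G₂) (f : H₁ ≃g H₂) :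
    (G₁ □ H₁) ≃g (G₂ □ H₂) :=
  ⟨e.toEquiv.prodCongr f.toEquiv, by simp [boxProd_adj, e.map_adj_iff, f.map_adj_iff]⟩

/-- A Hamiltonian path from `x` to `y`, recorded by its list of vertices: unlike walks, such
lists can be concatenated without transporting endpoints. -/
structure IsHamList (G : SimpleGraph V) (x y : V) (L : List V) : Prop where
  isChain : L.IsChain G.Adj
  nodup : L.Nodup
  mem : ∀ v, v ∈ L
  head?_eq : L.head? = some x
  getLast?_eq : L.getLast? = some y

namespace IsHamList

variable {x y : V} {L : List V}

lemma ne_nil (h : G.IsHamList x y L) : L ≠ [] := by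
  rintro rfl
  simpa using h.head?_eq

lemma exists_isHamiltonian [DecidableEq V] (h : G.IsHamList x y L) :
    ∃ p : G.Walk x y, p.IsHamiltonian := by
  have hx : L.head h.ne_nil = x := by simpa [List.head?_eq_some_head h.ne_nil] using h.head?_eq
  have hy : L.getLast h.ne_nil = y := by
    simpa [List.getLast?_eq_some_getLast h.ne_nil] using h.getLast?_eq
  refine ⟨(Walk.ofSupport L h.ne_nil h.isChain).copy hx hy, fun v => ?_⟩
  rw [Walk.support_copy, Walk.support_ofSupport]
  exact List.count_eq_one_of_mem h.nodup (h.mem v)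

lemma reverse (h : G.IsHamList x y L) : G.IsHamList y x L.reverse where
  isChain := List.isChain_reverse.2 (h.isChain.imp fun _ _ hab => hab.symm)
  nodup := List.nodup_reverse.2 h.nodup
  mem v := List.mem_reverse.2 (h.mem v)
  head?_eq := by rw [List.head?_reverse, h.getLast?_eq]
  getLast?_eq := by rw [List.getLast?_reverse, h.head?_eq]

lemma map (e : G ≃g G') (h : G.IsHamList x y L) : G'.IsHamList (e x) (e y) (L.map e) where
  isChain := List.isChain_map _ |>.2 (h.isChain.imp fun _ _ hab => e.map_adj_iff.2 hab)
  nodup := h.nodup.map e.injective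
  mem w := List.mem_map.2 ⟨e.symm w, h.mem _, e.apply_symm_apply w⟩
  head?_eq := by rw [List.head?_map, h.head?_eq, Option.map_some]
  getLast?_eq := by rw [List.getLast?_map, h.getLast?_eq, Option.map_some]

lemma length_eq [Fintype V] (h : G.IsHamList x y L) : L.length = Fintype.card V := by
  classical
  rw [← List.toFinset_card_of_nodup h.nodup,
    Finset.eq_univ_of_forall fun v => List.mem_toFinset.2 (h.mem v), Finset.card_univ]

end IsHamList

def HamLaceable (G : SimpleGraph V) (π : V → ZMod 2) : Prop :=
  ∀ x y, π x ≠ π y → ∃ L, G.IsHamList x y L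

lemma HamLaceable.of_iso (e : G ≃g G') {π : V → ZMod 2} {π' : W → ZMod 2}
    (hπ : ∀ v, π' (e v) = π v) (h : G.HamLaceable π) : G'.HamLaceable π' := by
  intro x y hxy
  obtain ⟨L, hL⟩ := h (e.symm x) (e.symm y) (by simpa [← hπ] using hxy)
  exact ⟨_, by simpa using hL.map e⟩

end SimpleGraph

def zmodCycle (k : ℕ) : SimpleGraph (ZMod k) := SimpleGraph.fromRel fun i j => j = i + 1

section ZModCycle

variable {k : ℕ}

lemma zmodCycle_adj {i j : ZMod k} :
    (zmodCycle k).Adj i j ↔ i ≠ j ∧ (j = i + 1 ∨ i = j + 1) :=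
  SimpleGraph.fromRel_adj _ _ _

lemma zmodCycle_adj_add_one [Fact (1 < k)] (z : ZMod k) : (zmodCycle k).Adj z (z + 1) :=
  zmodCycle_adj.2 ⟨by simp, Or.inl rfl⟩

@[simps!]
def zmodCycleNegIso (k : ℕ) : zmodCycle k ≃g zmodCycle k :=
  ⟨Equiv.neg _, fun {i j} => by
    simp only [Equiv.neg_apply, zmodCycle_adj, ne_eq, neg_inj]
    constructor <;> rintro ⟨hne, h | h⟩
    all_goals exact ⟨hne, by first
      | exact .inl (by linear_combination h) | exact .inr (by linear_combination h)⟩⟩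

def cycleArc (a : ZMod k) (d : ℕ) : List (ZMod k) :=
  (List.range d).map fun s : ℕ => a + (s : ZMod k)

variable {a ℓ : ZMod k} {d : ℕ}

@[simp]
lemma mem_cycleArc : ℓ ∈ cycleArc a d ↔ ∃ s < d, a + (s : ZMod k) = ℓ := by
  simp [cycleArc]

lemma nodup_cycleArc [NeZero k] (hd : d ≤ k) : (cycleArc a d).Nodup := by
  refine List.nodup_range.map_on fun s hs t ht hst => ?_
  have := congrArg ZMod.val (add_left_cancel hst)
  rwa [ZMod.val_natCast_of_lt (by simp at hs; omega),
    ZMod.val_natCast_of_lt (by simp at ht; omega)] at this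

lemma isChain_cycleArc [Fact (1 < k)] : (cycleArc a d).IsChain (zmodCycle k).Adj := by
  rw [List.isChain_iff_getElem]
  intro i hi
  simpa [cycleArc, add_assoc] using zmodCycle_adj_add_one (a + (i : ZMod k))

lemma head?_cycleArc (hd : 0 < d) : (cycleArc a d).head? = some a := by
  simp [cycleArc, List.head?_range, hd.ne']

lemma getLast?_cycleArc (hd : 0 < d) :
    (cycleArc a d).getLast? = some (a + ((d - 1 : ℕ) : ZMod k)) := by
  simp [cycleArc, List.getLast?_range, hd.ne']

lemma isHamList_cycleArc [Fact (1 < k)] (a : ZMod k) :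
    (zmodCycle k).IsHamList a (a - 1) (cycleArc a k) where
  isChain := isChain_cycleArc
  nodup := nodup_cycleArc le_rfl
  mem ℓ := mem_cycleArc.2 ⟨(ℓ - a).val, ZMod.val_lt _, by simp⟩
  head?_eq := head?_cycleArc (NeZero.pos k)
  getLast?_eq := by
    rw [getLast?_cycleArc (NeZero.pos k), Nat.cast_pred (NeZero.pos k), ZMod.natCast_self]
    ring_nf

lemma exists_isHamList_of_adj [Fact (1 < k)] {u v : ZMod k} (h : (zmodCycle k).Adj u v) :
    ∃ L, (zmodCycle k).IsHamList u v L := by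
  rcases (zmodCycle_adj.1 h).2 with rfl | rfl
  · have h := (isHamList_cycleArc (u + 1)).reverse
    rw [add_sub_cancel_right] at h
    exact ⟨_, h⟩
  · have h := isHamList_cycleArc (v + 1)
    rw [add_sub_cancel_right] at h
    exact ⟨_, h⟩

end ZModCycle

section ZModParity

variable {k : ℕ}

def zmodParity (z : ZMod k) : ZMod 2 := (z.val : ZMod 2)

lemma parity_eq_sum_zmodParity {n : ℕ} (u : Fin n → ZMod k) :
    parity u = ∑ i, zmodParity (u i) :=
  Nat.cast_sum _ _

lemma zmodParity_eq_castHom [NeZero k] (hk : Even k) (z : ZMod k) :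
    zmodParity z = ZMod.castHom (even_iff_two_dvd.1 hk) (ZMod 2) z :=
  (ZMod.cast_eq_val z).symm

lemma zmodParity_add [NeZero k] (hk : Even k) (a b : ZMod k) :
    zmodParity (a + b) = zmodParity a + zmodParity b := by
  simp only [zmodParity_eq_castHom hk, map_add]

lemma zmodParity_neg [NeZero k] (hk : Even k) (z : ZMod k) : zmodParity (-z) = zmodParity z := by
  simp only [zmodParity_eq_castHom hk, map_neg, ZMod.neg_eq_self_mod_two]

lemma zmodParity_one [Fact (1 < k)] : zmodParity (1 : ZMod k) = 1 := by
  simp [zmodParity, ZMod.val_one]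

lemma ZMod.eq_add_one_of_ne {a b : ZMod 2} (h : a ≠ b) : a = b + 1 := by
  revert a b; decide

end ZModParity

section Boustrophedon

variable {V : Type*} {H : SimpleGraph V} {k : ℕ}

def column (a : ZMod k) (d : ℕ) (v : V) : List (ZMod k × V) :=
  (cycleArc a d).map fun ℓ => (ℓ, v)

def boustrophedon (a : ZMod k) (d : ℕ) : List V → List (ZMod k × V)
  | u :: v :: P => column a d u ++ (column a d v).reverse ++ boustrophedon a d P
  | _ => []

variable {a ℓ : ZMod k} {d : ℕ} {u v w y : V} {P : List V}

@[simp]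
lemma mem_column : (ℓ, w) ∈ column a d v ↔ w = v ∧ ∃ s < d, a + (s : ZMod k) = ℓ := by
  simp [column, and_comm, eq_comm]

lemma nodup_column [NeZero k] (hd : d ≤ k) : (column a d v).Nodup :=
  (nodup_cycleArc hd).map fun _ _ h => congrArg Prod.fst h

lemma isChain_column [Fact (1 < k)] : (column a d v).IsChain (zmodCycle k □ H).Adj :=
  List.isChain_map _ |>.2 (isChain_cycleArc.imp fun _ _ h => boxProd_adj_left.2 h)

lemma head?_column (hd : 0 < d) : (column a d v).head? = some (a, v) := by
  simp [column, head?_cycleArc hd]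

lemma getLast?_column (hd : 0 < d) :
    (column a d v).getLast? = some (a + ((d - 1 : ℕ) : ZMod k), v) := by
  simp [column, getLast?_cycleArc hd]

lemma snd_mem_of_mem_boustrophedon {x : ZMod k × V} (hx : x ∈ boustrophedon a d P) :
    x.2 ∈ P := by
  fun_induction boustrophedon a d P with
  | case1 u v P ih =>
    simp only [List.mem_append, List.mem_reverse] at hx
    rcases hx with (hx | hx) | hx
    · simp [(mem_column.1 (show (x.1, x.2) ∈ _ from hx)).1]
    · simp [(mem_column.1 (show (x.1, x.2) ∈ _ from hx)).1]
    · exact List.mem_cons_of_mem _ (List.mem_cons_of_mem _ (ih hx))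
  | case2 => simp at hx

lemma mem_boustrophedon (hP : Even P.length) :
    (ℓ, w) ∈ boustrophedon a d P ↔ w ∈ P ∧ ∃ s < d, a + (s : ZMod k) = ℓ := by
  fun_induction boustrophedon a d P with
  | case1 u v P ih =>
    simp only [List.length_cons, Nat.even_add_one, not_not] at hP
    simp only [List.mem_append, List.mem_reverse, mem_column, ih hP, List.mem_cons,
      ← or_and_right, or_assoc]
  | case2 P h =>
    rcases P with _ | ⟨u, _ | ⟨v, P⟩⟩
    · simp
    · simp at hP
    · exact absurd rfl (h u v P)

lemma nodup_boustrophedon [NeZero k] (hd : d ≤ k) (hP : P.Nodup) :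
    (boustrophedon a d P).Nodup := by
  fun_induction boustrophedon a d P with
  | case1 u v P ih =>
    simp only [List.nodup_cons, List.mem_cons, not_or] at hP
    obtain ⟨⟨huv, huP⟩, hvP, hP⟩ := hP
    refine ((nodup_column hd).append (List.nodup_reverse.2 (nodup_column hd)) ?_).append
      (ih hP) ?_
    · intro x hu hv
      rw [List.mem_reverse] at hv
      exact huv ((mem_column.1 hu).1.symm.trans (mem_column.1 hv).1)
    · intro x hx hx'
      have := snd_mem_of_mem_boustrophedon hx'
      simp only [List.mem_append, List.mem_reverse] at hx
      rcases hx with hx | hx <;> rw [(mem_column.1 hx).1] at this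
      exacts [huP this, hvP this]
  | case2 => simp

lemma isChain_boustrophedon [Fact (1 < k)] (hd : 0 < d) (hP : P.IsChain H.Adj) :
    (boustrophedon a d P).IsChain (zmodCycle k □ H).Adj := by
  fun_induction boustrophedon a d P with
  | case1 u v P ih =>
    obtain ⟨huv, hvP⟩ := List.isChain_cons_cons.1 hP
    have hrev : (column a d v).reverse.IsChain (zmodCycle k □ H).Adj :=
      List.isChain_reverse.2 (isChain_column.imp fun _ _ h => h.symm)
    refine List.isChain_append.2 ⟨List.isChain_append.2 ⟨isChain_column, hrev, ?_⟩,
      ih hvP.tail, ?_⟩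
    · simp [getLast?_column hd, List.head?_reverse, huv]
    · rcases P with _ | ⟨w, _ | ⟨x, P⟩⟩
      · simp [boustrophedon]
      · simp [boustrophedon]
      · simp [boustrophedon, head?_column hd, List.getLast?_reverse,
          (List.isChain_cons_cons.1 hvP).1]
  | case2 => simp

lemma head?_boustrophedon (hd : 0 < d) (hP : Even P.length) (hu : P.head? = some u) :
    (boustrophedon a d P).head? = some (a, u) := by
  rcases P with _ | ⟨u', _ | ⟨v, P⟩⟩
  · simp at hu
  · simp at hP
  · simp_all [boustrophedon, head?_column hd]

lemma getLast?_boustrophedon (hd : 0 < d) (hP : Even P.length) (hy : P.getLast? = some y) :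
    (boustrophedon a d P).getLast? = some (a, y) := by
  fun_induction boustrophedon a d P with
  | case1 u v P ih =>
    simp only [List.length_cons, Nat.even_add_one, not_not] at hP
    rcases P with _ | ⟨w, P⟩
    · simp_all [boustrophedon, List.getLast?_reverse, head?_column hd]
    · simp only [List.getLast?_cons_cons] at hy
      rw [List.getLast?_append, ih hP hy]
      rfl
  | case2 P h =>
    rcases P with _ | ⟨u, _ | ⟨v, P⟩⟩
    · simp at hy
    · simp at hP
    · exact absurd rfl (h u v P)

lemma isHamList_boustrophedon [Fact (1 < k)] [Fintype V] (hV : Even (Fintype.card V))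
    {x : V} (hP : H.IsHamList x y P) (a : ZMod k) :
    (zmodCycle k □ H).IsHamList (a, x) (a, y) (boustrophedon a k P) := by
  have hk : 0 < k := NeZero.pos k
  have hlen : Even P.length := hP.length_eq ▸ hV
  exact {
    isChain := isChain_boustrophedon hk hP.isChain
    nodup := nodup_boustrophedon le_rfl hP.nodup
    mem := fun ⟨ℓ, v⟩ =>
      (mem_boustrophedon hlen).2 ⟨hP.mem v, (ℓ - a).val, ZMod.val_lt _, by simp⟩
    head?_eq := head?_boustrophedon hk hlen hP.head?_eq
    getLast?_eq := getLast?_boustrophedon hk hlen hP.getLast?_eq }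

end Boustrophedon

section Descent

variable {V : Type*} {H : SimpleGraph V} {k : ℕ}

def descent (A : ℕ → List V) (a : ZMod k) : ℕ → List (ZMod k × V)
  | 0 => []
  | m + 1 => descent A a m ++ (A m).map fun v => (a - ((m + 1 : ℕ) : ZMod k), v)

variable {A : ℕ → List V} {E : ℕ → V} {a ℓ : ZMod k} {m : ℕ} {v : V}

lemma mem_descent :
    (ℓ, v) ∈ descent A a m ↔ ∃ t < m, ℓ = a - ((t + 1 : ℕ) : ZMod k) ∧ v ∈ A t := by
  induction m with
  | zero => simp [descent]
  | succ m ih =>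
    simp only [descent, List.mem_append, ih, List.mem_map, Prod.mk.injEq, Nat.lt_succ_iff_lt_or_eq,
      or_and_right, exists_or, exists_eq_left]
    aesop

lemma nodup_descent [NeZero k] (hm : m < k) (hA : ∀ t < m, (A t).Nodup) :
    (descent A a m).Nodup := by
  induction m with
  | zero => simp [descent]
  | succ m ih =>
    refine (ih (by omega) fun t ht => hA t (by omega)).append
      ((hA m (by omega)).map fun _ _ h => congrArg Prod.snd h) ?_
    rintro ⟨ℓ, v⟩ hx hx'
    obtain ⟨t, ht, rfl, -⟩ := mem_descent.1 hx
    obtain ⟨w, -, hw⟩ := List.mem_map.1 hx'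
    have := congrArg ZMod.val (sub_right_injective (Prod.ext_iff.1 hw).1)
    rw [ZMod.val_natCast_of_lt hm, ZMod.val_natCast_of_lt (by omega)] at this
    omega

lemma getLast?_descent (hA : H.IsHamList (E m) (E (m + 1)) (A m)) :
    (descent A a (m + 1)).getLast? = some (a - ((m + 1 : ℕ) : ZMod k), E (m + 1)) := by
  simp [descent, List.getLast?_append, List.getLast?_map, hA.getLast?_eq]

lemma isChain_descent [Fact (1 < k)] (hA : ∀ t < m, H.IsHamList (E t) (E (t + 1)) (A t)) :
    (descent A a m).IsChain (zmodCycle k □ H).Adj := by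
  induction m with
  | zero => simp [descent]
  | succ m ih =>
    refine List.isChain_append.2 ⟨ih fun t ht => hA t (by omega),
      List.isChain_map _ |>.2 ((hA m (by omega)).isChain.imp fun _ _ h => boxProd_adj_right.2 h),
      ?_⟩
    rcases m with _ | m
    · simp [descent]
    rw [getLast?_descent (hA m (by omega)), List.head?_map, (hA (m + 1) (by omega)).head?_eq]
    simp only [Option.mem_def, Option.map_some, Option.some.injEq, forall_eq']
    refine boxProd_adj_left.2 ?_
    convert (zmodCycle_adj_add_one (a - ((m + 2 : ℕ) : ZMod k))).symm using 1
    push_cast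
    ring

lemma head?_descent (hA : ∀ t < m, H.IsHamList (E t) (E (t + 1)) (A t)) (hm : 0 < m) :
    (descent A a m).head? = some (a - 1, E 0) := by
  induction m with
  | zero => omega
  | succ m ih =>
    rcases m with _ | m
    · simp [descent, (hA 0 one_pos).head?_eq]
    · rw [descent, List.head?_append, ih (fun t ht => hA t (by omega)) m.succ_pos]
      rfl

end Descent

section Arc

variable {V : Type*} {H : SimpleGraph V} {k : ℕ}

lemma ZMod.add_natCast_ne_sub_natCast [NeZero k] (a : ZMod k) {s t d : ℕ} (hs : s < d)
    (ht : t < k - d) : a + (s : ZMod k) ≠ a - ((t + 1 : ℕ) : ZMod k) := by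
  intro h
  have h0 : ((s + (t + 1) : ℕ) : ZMod k) = 0 := by push_cast at h ⊢; linear_combination h
  have := Nat.le_of_dvd (by omega) ((ZMod.natCast_eq_zero_iff _ _).1 h0)
  omega

lemma ZMod.exists_add_natCast_or_sub_natCast [NeZero k] (a ℓ : ZMod k) {d : ℕ} (hd : d ≤ k) :
    (∃ s < d, a + (s : ZMod k) = ℓ) ∨ ∃ t < k - d, ℓ = a - ((t + 1 : ℕ) : ZMod k) := by
  have ho := ZMod.val_lt (ℓ - a)
  by_cases hod : (ℓ - a).val < d
  · exact .inl ⟨_, hod, by simp⟩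
  · refine .inr ⟨k - 1 - (ℓ - a).val, by omega, ?_⟩
    rw [show k - 1 - (ℓ - a).val + 1 = k - (ℓ - a).val by omega, Nat.cast_sub ho.le,
      ZMod.natCast_self, ZMod.natCast_zmod_val]
    ring

/-- The witness: a boustrophedon along a Hamiltonian path of `H` from `E 0` to `E 1` sweeps the
layers `a, …, a + (d - 1)` and, `H` having even order, ends in layer `a` again; from there it
descends through the layers `a - 1, …, a + d`, crossing layer `a - (t + 1)` along a Hamiltonian
path from `E (t + 1)` to `E (t + 2)`. -/
theorem exists_isHamList_boxProd_of_chain [Fact (1 < k)] [Fintype V] (hV : Even (Fintype.card V))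
    {d : ℕ} (hd : 0 < d) (hdk : d < k) {E : ℕ → V}
    (hE : ∀ t ≤ k - d, ∃ L, H.IsHamList (E t) (E (t + 1)) L) (a : ZMod k) :
    ∃ L, (zmodCycle k □ H).IsHamList (a, E 0) (a + d, E (k - d + 1)) L := by
  choose! A hA using hE
  have hP := hA 0 (Nat.zero_le _)
  have hlen : Even (A 0).length := hP.length_eq ▸ hV
  have hD : ∀ t < k - d, H.IsHamList (E (t + 1)) (E (t + 1 + 1)) (A (t + 1)) :=
    fun t ht => hA (t + 1) ht
  obtain ⟨m, hm⟩ : ∃ m, k - d = m + 1 := ⟨k - d - 1, by omega⟩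
  refine ⟨boustrophedon a d (A 0) ++ descent (fun t => A (t + 1)) a (k - d), ?_, ?_, ?_, ?_, ?_⟩
  · refine List.isChain_append.2 ⟨isChain_boustrophedon hd hP.isChain, isChain_descent hD, ?_⟩
    rw [getLast?_boustrophedon hd hlen hP.getLast?_eq, head?_descent hD (by omega)]
    simp only [Option.mem_def, Option.some.injEq, forall_eq']
    refine boxProd_adj_left.2 ?_
    convert (zmodCycle_adj_add_one (a - 1)).symm using 1
    ring
  · refine (nodup_boustrophedon hdk.le hP.nodup).append
      (nodup_descent (by omega) fun t ht => (hD t ht).nodup) ?_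
    rintro ⟨ℓ, v⟩ h h'
    obtain ⟨-, s, hs, rfl⟩ := (mem_boustrophedon hlen).1 h
    obtain ⟨t, ht, he, -⟩ := mem_descent.1 h'
    exact ZMod.add_natCast_ne_sub_natCast a hs ht he
  · rintro ⟨ℓ, v⟩
    rcases ZMod.exists_add_natCast_or_sub_natCast a ℓ hdk.le with ⟨s, hs, h⟩ | ⟨t, ht, h⟩
    · exact List.mem_append_left _ ((mem_boustrophedon hlen).2 ⟨hP.mem v, s, hs, h⟩)
    · exact List.mem_append_right _ (mem_descent.2 ⟨t, ht, h, (hD t ht).mem v⟩)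
  · rw [List.head?_append, head?_boustrophedon hd hlen hP.head?_eq]
    rfl
  · have hlayer : a - ((m + 1 : ℕ) : ZMod k) = a + d := by
      rw [← hm, Nat.cast_sub hdk.le, ZMod.natCast_self]
      ring
    rw [List.getLast?_append, hm,
      getLast?_descent (A := fun t => A (t + 1)) (E := fun t => E (t + 1)) (hD m (by omega)),
      hlayer]
    rfl

end Arc

section Laceable

variable {V : Type*} {H : SimpleGraph V} {k : ℕ}

lemma exists_chain_of_parity_ne {π : V → ZMod 2} {x w y : V} (hw : π w ≠ π x) (m : ℕ)
    (hy : π y ≠ π x + (m : ZMod 2)) :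
    ∃ E : ℕ → V, E 0 = x ∧ E (m + 1) = y ∧ ∀ t ≤ m, π (E t) ≠ π (E (t + 1)) := by
  let E t := if t = m + 1 then y else if Even t then x else w
  have hE : ∀ t ≤ m, π (E t) = π x + (t : ZMod 2) := by
    intro t ht
    rcases Nat.even_or_odd t with h | h
    · simp [E, show t ≠ m + 1 by omega, h, ZMod.natCast_eq_zero_iff_even.2 h]
    · simp [E, show t ≠ m + 1 by omega, Nat.not_even_iff_odd.2 h,
        ZMod.natCast_eq_one_iff_odd.2 h, ZMod.eq_add_one_of_ne hw]
  refine ⟨E, by simp [E], by simp [E], fun t ht => ?_⟩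
  rw [hE t ht]
  rcases ht.lt_or_eq with ht | rfl
  · simp [hE (t + 1) ht]
  · simpa [E] using hy.symm

theorem HamLaceable.boxProd_zmodCycle [Fact (1 < k)] [Fintype V] (hk : Even k)
    (hV : Even (Fintype.card V)) {π : V → ZMod 2} (hπ : ∀ x, ∃ w, π w ≠ π x)
    (h : H.HamLaceable π) : (zmodCycle k □ H).HamLaceable fun p => zmodParity p.1 + π p.2 := by
  rintro ⟨a, x⟩ ⟨b, y⟩ hxy
  dsimp only at hxy
  by_cases hab : a = b
  · subst hab
    obtain ⟨P, hP⟩ := h x y fun h' => hxy (by simp [h'])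
    exact ⟨_, isHamList_boustrophedon hV hP a⟩
  set d := (b - a).val
  have hd : 0 < d := ZMod.val_pos.2 (sub_ne_zero.2 (Ne.symm hab))
  have hb : b = a + d := by simp [d]
  have hy : π y ≠ π x + ((k - d : ℕ) : ZMod 2) := by
    have hpar : zmodParity b = zmodParity a + d := by
      rw [show (d : ZMod 2) = zmodParity (b - a) from rfl, ← zmodParity_add hk, add_sub_cancel]
    rw [Nat.cast_sub (ZMod.val_lt (b - a)).le, ZMod.natCast_eq_zero_iff_even.2 hk]
    intro h'
    apply hxy
    rw [hpar, h']
    ring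
  obtain ⟨w, hw⟩ := hπ x
  obtain ⟨E, rfl, rfl, hE⟩ := exists_chain_of_parity_ne hw (k - d) hy
  rw [hb]
  exact exists_isHamList_boxProd_of_chain hV hd (ZMod.val_lt _) (fun t ht => h _ _ (hE t ht)) a

end Laceable

section Torus

variable {k : ℕ}

lemma exists_adj_chain_zmodCycle [Fact (1 < k)] (hk : Even k) (u v : ZMod k) (m : ℕ)
    (hpar : zmodParity (v - u) = m) (hreach : (v - u).val ≤ m ∨ k ≤ (v - u).val + m) :
    ∃ E : ℕ → ZMod k, E 0 = u ∧ E m = v ∧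
      ∀ t < m, (zmodCycle k).Adj (E t) (E (t + 1)) := by
  set c := (v - u).val with hc
  have hck : c < k := ZMod.val_lt _
  have hcm : c % 2 = m % 2 := (ZMod.natCast_eq_natCast_iff' c m 2).1 hpar
  obtain ⟨j, hj⟩ := hk
  obtain ⟨p, hpm, hp⟩ : ∃ p ≤ m, p = (m - p) + c ∨ p + k = (m - p) + c := by
    rcases hreach with h | h
    · exact ⟨(m + c) / 2, by omega, .inl (by omega)⟩
    · exact ⟨(m + c - k) / 2, by omega, .inr (by omega)⟩
  let E t : ZMod k := u + (min t p : ℕ) - (t - p : ℕ)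
  have hup : ∀ t < p, E (t + 1) = E t + 1 := fun t ht => by
    simp only [E, min_eq_left (Nat.succ_le_of_lt ht), min_eq_left ht.le, Nat.sub_eq_zero_of_le ht,
      Nat.sub_eq_zero_of_le ht.le]
    push_cast; ring
  have hdown : ∀ t ≥ p, E t = E (t + 1) + 1 := fun t ht => by
    simp only [E, min_eq_right ht, min_eq_right (Nat.le_succ_of_le ht),
      show t + 1 - p = t - p + 1 by omega]
    push_cast; ring
  refine ⟨E, by simp [E], ?_, fun t _ => ?_⟩
  · have hv : v = u + c := by simp [c]
    simp only [E, min_eq_right hpm, hv]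
    rcases hp with hp | hp <;> have := congrArg (Nat.cast : ℕ → ZMod k) hp <;>
      push_cast [ZMod.natCast_self] at this <;> linear_combination this
  · by_cases htp : t < p
    · rw [hup t htp]; exact zmodCycle_adj_add_one _
    · rw [hdown t (not_lt.1 htp)]; exact (zmodCycle_adj_add_one _).symm

lemma exists_isHamList_torus [Fact (1 < k)] (hk : Even k) {a b u v : ZMod k}
    (hpar : zmodParity a + zmodParity u ≠ zmodParity b + zmodParity v) (hab : a ≠ b)
    (hreach : (v - u).val ≤ k - (b - a).val + 1 ∨ (b - a).val ≤ (v - u).val + 1) :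
    ∃ L, (zmodCycle k □ zmodCycle k).IsHamList (a, u) (b, v) L := by
  set d := (b - a).val
  have hd : 0 < d := ZMod.val_pos.2 (sub_ne_zero.2 (Ne.symm hab))
  have hdk : d < k := ZMod.val_lt _
  have hcycle : zmodParity (v - u) = ((k - d + 1 : ℕ) : ZMod 2) := by
    have hb : zmodParity b = zmodParity a + d := by
      rw [show (d : ZMod 2) = zmodParity (b - a) from rfl, ← zmodParity_add hk, add_sub_cancel]
    have hv : zmodParity v = zmodParity u + zmodParity (v - u) := by
      rw [← zmodParity_add hk, add_sub_cancel]
    rw [hb, hv] at hpar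
    rw [Nat.cast_add, Nat.cast_sub hdk.le, ZMod.natCast_eq_zero_iff_even.2 hk, zero_sub,
      ZMod.neg_eq_self_mod_two, Nat.cast_one]
    exact ZMod.eq_add_one_of_ne fun h => hpar (by rw [h]; grind)
  obtain ⟨E, rfl, rfl, hE⟩ := exists_adj_chain_zmodCycle hk u v (k - d + 1) hcycle (by omega)
  have hV : Even (Fintype.card (ZMod k)) := by rwa [ZMod.card]
  have hb : b = a + d := by simp [d]
  rw [hb]
  exact exists_isHamList_boxProd_of_chain hV hd hdk
    (fun t ht => exists_isHamList_of_adj (hE t (by omega))) a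

/-- The generic construction needs few layers or a short way round the other cycle; if it has
neither, reflecting the layers exchanges `d` and `k - d`, and if `a = b` we swap the factors. -/
theorem hamLaceable_torus [Fact (1 < k)] (hk : Even k) :
    (zmodCycle k □ zmodCycle k).HamLaceable fun p => zmodParity p.1 + zmodParity p.2 := by
  rintro ⟨a, u⟩ ⟨b, v⟩ hpar
  dsimp only at hpar
  by_cases hab : a = b
  · subst hab
    have huv : u ≠ v := by rintro rfl; exact hpar rfl
    obtain ⟨L, hL⟩ := exists_isHamList_torus (a := u) (b := v) (u := a) (v := a) hk
      (by rwa [add_comm, add_comm (zmodParity v)]) huv (by simp)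
    exact ⟨_, by simpa using hL.map (boxProdComm _ _)⟩
  by_cases hreach : (v - u).val ≤ k - (b - a).val + 1 ∨ (b - a).val ≤ (v - u).val + 1
  · exact exists_isHamList_torus hk hpar hab hreach
  have hval : (-b - -a).val = k - (b - a).val := by
    rw [show -b - -a = -(b - a) by ring, ZMod.neg_val, if_neg (sub_ne_zero.2 (Ne.symm hab))]
  obtain ⟨L, hL⟩ := exists_isHamList_torus (a := -a) (b := -b) (u := u) (v := v) hk
    (by rwa [zmodParity_neg hk, zmodParity_neg hk]) (neg_injective.ne hab) (by omega)
  exact ⟨_, by simpa using hL.map ((zmodCycleNegIso k).boxProd (Iso.refl))⟩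

end Torus

section KaryCube

variable {n k : ℕ}

lemma karyCube_adj_iff {u v : Fin n → ZMod k} :
    (karyCube n k).Adj u v ↔
      ∃ j, (zmodCycle k).Adj (u j) (v j) ∧ ∀ i, i ≠ j → u i = v i := by
  simp only [karyCube, zmodCycle_adj]
  constructor
  · rintro ⟨hne, j, hj, hrest⟩
    refine ⟨j, ⟨fun h => hne (funext fun i => ?_), hj.symm⟩, hrest⟩
    by_cases hi : i = j
    · exact hi ▸ h
    · exact hrest i hi
  · rintro ⟨j, ⟨hne, hj⟩, hrest⟩
    exact ⟨fun h => hne (congrFun h j), j, hj.symm, hrest⟩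

@[simps!]
def karyCubeSuccIso (n k : ℕ) : (zmodCycle k □ karyCube n k) ≃g karyCube (n + 1) k :=
  ⟨Fin.consEquiv fun _ => ZMod k, fun {p q} => by
    simp only [Fin.consEquiv_apply, karyCube_adj_iff, Fin.exists_fin_succ, Fin.forall_fin_succ,
      Fin.cons_zero, Fin.cons_succ, boxProd_adj, ne_eq, Fin.succ_ne_zero, not_false_eq_true,
      forall_const, Fin.succ_inj, funext_iff, not_true_eq_false, false_implies, true_and,
      (Fin.succ_ne_zero _).symm]
    refine or_congr Iff.rfl ?_
    rw [← exists_and_right]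
    exact exists_congr fun j => by tauto⟩

@[simps!]
def karyCubeOneIso (k : ℕ) : zmodCycle k ≃g karyCube 1 k :=
  ⟨(Equiv.funUnique (Fin 1) (ZMod k)).symm, by
    simp [karyCube_adj_iff, Fin.exists_fin_one, Fin.forall_fin_one]⟩

lemma parity_cons (a : ZMod k) (u : Fin n → ZMod k) :
    parity (Fin.cons a u : Fin (n + 1) → ZMod k) = zmodParity a + parity u := by
  simp [parity_eq_sum_zmodParity, Fin.sum_univ_succ]

lemma exists_parity_ne [Fact (1 < k)] (hk : Even k) (u : Fin (n + 1) → ZMod k) :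
    ∃ v : Fin (n + 1) → ZMod k, parity v ≠ parity u := by
  have hu := parity_cons (u 0) (Fin.tail u)
  rw [Fin.cons_self_tail] at hu
  refine ⟨Fin.cons (u 0 + 1) (Fin.tail u), ?_⟩
  simp [parity_cons, zmodParity_add hk, zmodParity_one, hu]

theorem hamLaceable_karyCube [Fact (1 < k)] (hk : Even k) (n : ℕ) :
    (karyCube (n + 2) k).HamLaceable parity := by
  induction n with
  | zero =>
    refine (hamLaceable_torus hk).of_iso
      ((Iso.refl.boxProd (karyCubeOneIso k)).trans (karyCubeSuccIso 1 k)) ?_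
    rintro ⟨a, b⟩
    simp [parity_eq_sum_zmodParity]
  | succ n ih =>
    have hV : Even (Fintype.card (Fin (n + 2) → ZMod k)) := by
      simpa using hk.pow_of_ne_zero (n + 1).succ_ne_zero
    exact (HamLaceable.boxProd_zmodCycle hk hV (exists_parity_ne hk) ih).of_iso
      (karyCubeSuccIso _ k) fun _ => parity_cons _ _

end KaryCube

/-- For `n ≥ 2` and even `k ≥ 4`, any two vertices of different parities in `Q_n^k`
are joined by a Hamiltonian path. -/
theorem stmt9 (n k : ℕ) (hn : 2 ≤ n) (hk : 4 ≤ k) (hke : Even k)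
    (x y : Fin n → ZMod k) (hpar : parity x ≠ parity y) :
    ∃ p : (karyCube n k).Walk x y, p.IsPath ∧ p.IsHamiltonian := by
  have : Fact (1 < k) := ⟨by omega⟩
  obtain ⟨m, rfl⟩ : ∃ m, n = m + 2 := ⟨n - 2, by omega⟩
  obtain ⟨p, hp⟩ := (hamLaceable_karyCube hke m x y hpar).choose_spec.exists_isHamiltonian
  exact ⟨p, hp.isPath, hp⟩
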